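/- arXiv:1907.01700 — 2 statements merged into one kernel-verified Lean document; each statement's English description precedes it below -/
import Mathlib

section
/- In a tree T with nonnegative integer edge lengths ℓ, let X be a set of vertices inducing a connected subtree and let C* be the set of edges of T with exactly one endpoint in X. Then every path in T contains at most two edges of C*. Consequently, if the length of each edge of C* changes by at most 1 and all other edge lengths are unchanged, the diameter of T (the maximum ℓ-length over all paths) changes by at most 2. -/
open SimpleGraph

variable {V : Type*}

/-- The edge cut leaving a vertex set `X`: edges with exactly one endpoint in `X`. -/
def edgeCut (G : SimpleGraph V) (X : Set V) : Set (Sym2 V) :=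
  {e ∈ G.edgeSet | ∃ u v : V, e = s(u, v) ∧ u ∈ X ∧ v ∉ X}

/-- The diameter of `T` with respect to an edge-length function `ℓ`:
the maximum `ℓ`-length over all paths. -/
noncomputable def wDiam (T : SimpleGraph V) (ℓ : Sym2 V → ℕ) : ℕ :=
  sSup {L : ℕ | ∃ (u v : V) (p : T.Walk u v), p.IsPath ∧ L = (p.edges.map ℓ).sum}

/-- Key lemma: if both endpoints of a path lie in the connected set `X`, then the
whole path lies in `X` (by uniqueness of paths in a tree). -/
lemma path_support_subset_of_mem {T : SimpleGraph V} (hT : T.IsTree) {X : Set V}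
    (hXconn : ((⊤ : T.Subgraph).induce X).coe.Connected)
    {u v : V} (hu : u ∈ X) (hv : v ∈ X) {p : T.Walk u v} (hp : p.IsPath) :
    ∀ z ∈ p.support, z ∈ X := by
  classical
  obtain ⟨w⟩ := hXconn ⟨u, hu⟩ ⟨v, hv⟩
  have hmap : ∀ z ∈ (w.map ((⊤ : T.Subgraph).induce X).hom).support, z ∈ X := by
    intro z hz
    rw [SimpleGraph.Walk.support_map] at hz
    obtain ⟨⟨z', hz'⟩, _, rfl⟩ := List.mem_map.1 hz
    exact hz'
  have huniq := (hT.existsUnique_path u v).unique hp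
      (w.map ((⊤ : T.Subgraph).induce X).hom).toPath.2
  intro z hz
  rw [huniq] at hz
  exact hmap z (SimpleGraph.Walk.support_toPath_subset _ hz)

lemma cut_count_aux {T : SimpleGraph V} (hT : T.IsTree) {X : Set V}
    (hXconn : ((⊤ : T.Subgraph).induce X).coe.Connected) :
    ∀ {u v : V} (p : T.Walk u v), p.IsPath →
      {e ∈ edgeCut T X | e ∈ p.edges}.ncard ≤ 2 ∧
      (u ∈ X → {e ∈ edgeCut T X | e ∈ p.edges}.ncard ≤ 1) := by
  classical
  intro u v p
  induction p with
  | nil =>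
    intro _
    have : {e ∈ edgeCut T X | e ∈ (SimpleGraph.Walk.nil : T.Walk u u).edges} = ∅ := by
      ext e; simp
    simp [this]
  | @cons u w v h q ih =>
    intro hp
    have hq : q.IsPath := hp.of_cons
    have hus : u ∉ q.support := ((SimpleGraph.Walk.cons_isPath_iff h q).1 hp).2
    obtain ⟨ih1, ih2⟩ := ih hq
    have hfin : {e ∈ edgeCut T X | e ∈ q.edges}.Finite :=
      (q.edges.finite_toSet).subset (fun e he => he.2)
    have hedges : (SimpleGraph.Walk.cons h q).edges = s(u, w) :: q.edges := rfl
    by_cases huX : u ∈ X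
    · by_cases hwX : w ∈ X
      · -- edge not in cut, tail starts in X
        have hnc : s(u, w) ∉ edgeCut T X := by
          rintro ⟨-, a, b, hab, haX, hbX⟩
          rcases Sym2.eq_iff.1 hab with ⟨rfl, rfl⟩ | ⟨rfl, rfl⟩
          · exact hbX hwX
          · exact hbX huX
        have heq : {e ∈ edgeCut T X | e ∈ (SimpleGraph.Walk.cons h q).edges}
            = {e ∈ edgeCut T X | e ∈ q.edges} := by
          ext e
          simp only [hedges, List.mem_cons, Set.mem_setOf_eq]
          constructor
          · rintro ⟨hc, rfl | hmem⟩
            · exact absurd hc hnc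
            · exact ⟨hc, hmem⟩
          · rintro ⟨hc, hmem⟩; exact ⟨hc, Or.inr hmem⟩
        rw [heq]
        exact ⟨(ih2 hwX).trans (by norm_num), fun _ => ih2 hwX⟩
      · -- u ∈ X, w ∉ X : the tail never meets X again
        have hqempty : {e ∈ edgeCut T X | e ∈ q.edges} = ∅ := by
          ext e
          simp only [Set.mem_setOf_eq, Set.mem_empty_iff_false, iff_false, not_and]
          rintro ⟨-, a, b, rfl, haX, hbX⟩ hmem
          have ha : a ∈ q.support := q.fst_mem_support_of_mem_edges hmem
          -- build a path from u to a staying and apply the key lemma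
          have hr : (q.takeUntil a ha).IsPath := hq.takeUntil ha
          have hur : u ∉ (q.takeUntil a ha).support :=
            fun hmem' => hus (q.support_takeUntil_subset ha hmem')
          have hp' : (SimpleGraph.Walk.cons h (q.takeUntil a ha)).IsPath :=
            (SimpleGraph.Walk.cons_isPath_iff h _).2 ⟨hr, hur⟩
          have hall := path_support_subset_of_mem hT hXconn huX haX hp'
          have hwmem : w ∈ (SimpleGraph.Walk.cons h (q.takeUntil a ha)).support := by
            rw [SimpleGraph.Walk.support_cons]
            exact List.mem_cons_of_mem _ (q.takeUntil a ha).start_mem_support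
          exact hwX (hall w hwmem)
        have hsub : {e ∈ edgeCut T X | e ∈ (SimpleGraph.Walk.cons h q).edges}
            ⊆ {s(u, w)} := by
          intro e ⟨hc, he⟩
          rw [hedges, List.mem_cons] at he
          rcases he with rfl | hmem
          · rfl
          · exact absurd (hqempty ▸ (⟨hc, hmem⟩ : e ∈ {e ∈ edgeCut T X | e ∈ q.edges}))
              (Set.notMem_empty e)
        have h1 : {e ∈ edgeCut T X | e ∈ (SimpleGraph.Walk.cons h q).edges}.ncard ≤ 1 := by
          calc _ ≤ ({s(u, w)} : Set (Sym2 V)).ncard :=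
                Set.ncard_le_ncard hsub (Set.finite_singleton _)
            _ = 1 := Set.ncard_singleton _
        exact ⟨h1.trans (by norm_num), fun _ => h1⟩
    · -- u ∉ X
      have hsub : {e ∈ edgeCut T X | e ∈ (SimpleGraph.Walk.cons h q).edges}
          ⊆ insert s(u, w) {e ∈ edgeCut T X | e ∈ q.edges} := by
        intro e ⟨hc, he⟩
        rw [hedges, List.mem_cons] at he
        rcases he with rfl | hmem
        · exact Set.mem_insert _ _
        · exact Set.mem_insert_of_mem _ ⟨hc, hmem⟩
      by_cases hwX : w ∈ X
      · have hstep : {e ∈ edgeCut T X | e ∈ (SimpleGraph.Walk.cons h q).edges}.ncard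
            ≤ {e ∈ edgeCut T X | e ∈ q.edges}.ncard + 1 := by
          calc _ ≤ (insert s(u, w) {e ∈ edgeCut T X | e ∈ q.edges}).ncard :=
                Set.ncard_le_ncard hsub (hfin.insert _)
            _ ≤ _ := Set.ncard_insert_le _ _
        refine ⟨hstep.trans (Nat.add_le_add_right (ih2 hwX) 1),
          fun huX' => absurd huX' huX⟩
      · have hnc : s(u, w) ∉ edgeCut T X := by
          rintro ⟨-, a, b, hab, haX, hbX⟩
          rcases Sym2.eq_iff.1 hab with ⟨rfl, rfl⟩ | ⟨rfl, rfl⟩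
          · exact huX haX
          · exact hwX haX
        have heq : {e ∈ edgeCut T X | e ∈ (SimpleGraph.Walk.cons h q).edges}
            = {e ∈ edgeCut T X | e ∈ q.edges} := by
          ext e
          simp only [hedges, List.mem_cons, Set.mem_setOf_eq]
          constructor
          · rintro ⟨hc, rfl | hmem⟩
            · exact absurd hc hnc
            · exact ⟨hc, hmem⟩
          · rintro ⟨hc, hmem⟩; exact ⟨hc, Or.inr hmem⟩
        rw [heq]
        exact ⟨ih1, fun huX' => absurd huX' huX⟩

/-- in a tree `T`, the edge cut `C*` leaving a connected vertex set `X`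
meets every path in at most two edges; consequently, if each edge of `C*` changes
its length by at most `1` and all other lengths are unchanged, the diameter of `T`
changes by at most `2`. -/
theorem tree_cut_meets_path_twice_and_diam_change
    [Fintype V] (T : SimpleGraph V) (hT : T.IsTree) (X : Set V)
    (hXconn : ((⊤ : T.Subgraph).induce X).coe.Connected) :
    (∀ (u v : V) (p : T.Walk u v), p.IsPath →
        {e ∈ edgeCut T X | e ∈ p.edges}.ncard ≤ 2) ∧
    (∀ ℓ ℓ' : Sym2 V → ℕ,
        (∀ e ∉ edgeCut T X, ℓ' e = ℓ e) →
        (∀ e ∈ edgeCut T X, ((ℓ' e : ℤ) - ℓ e ≤ 1 ∧ (ℓ e : ℤ) - ℓ' e ≤ 1)) →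
        |(wDiam T ℓ' : ℤ) - (wDiam T ℓ : ℤ)| ≤ 2) := by
  classical
  have part1 : ∀ (u v : V) (p : T.Walk u v), p.IsPath →
      {e ∈ edgeCut T X | e ∈ p.edges}.ncard ≤ 2 :=
    fun u v p hp => (cut_count_aux hT hXconn p hp).1
  refine ⟨part1, ?_⟩
  -- the nonemptiness witness for the diameter set
  have hV : Nonempty V := hT.isConnected.nonempty
  obtain ⟨v₀⟩ := hV
  have hne : ∀ ℓ : Sym2 V → ℕ,
      {L : ℕ | ∃ (u v : V) (p : T.Walk u v), p.IsPath ∧ L = (p.edges.map ℓ).sum}.Nonempty :=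
    fun ℓ => ⟨0, v₀, v₀, SimpleGraph.Walk.nil, SimpleGraph.Walk.IsPath.nil, by simp⟩
  have hbdd : ∀ ℓ : Sym2 V → ℕ, BddAbove
      {L : ℕ | ∃ (u v : V) (p : T.Walk u v), p.IsPath ∧ L = (p.edges.map ℓ).sum} := by
    intro ℓ
    refine ⟨Fintype.card V * Finset.univ.sup ℓ, ?_⟩
    rintro L ⟨u, v, p, hp, rfl⟩
    calc (p.edges.map ℓ).sum ≤ (p.edges.map ℓ).length • Finset.univ.sup ℓ := by
          apply List.sum_le_card_nsmul
          intro x hx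
          obtain ⟨e, -, rfl⟩ := List.mem_map.1 hx
          exact Finset.le_sup (Finset.mem_univ e)
      _ = p.length * Finset.univ.sup ℓ := by
          rw [List.length_map, SimpleGraph.Walk.length_edges, smul_eq_mul]
      _ ≤ Fintype.card V * Finset.univ.sup ℓ :=
          Nat.mul_le_mul_right _ hp.length_lt.le
  -- per-path sum change is at most 2
  have hsum : ∀ (ℓ ℓ' : Sym2 V → ℕ),
      (∀ e ∉ edgeCut T X, ℓ' e = ℓ e) →
      (∀ e ∈ edgeCut T X, ((ℓ' e : ℤ) - ℓ e ≤ 1 ∧ (ℓ e : ℤ) - ℓ' e ≤ 1)) →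
      ∀ {u v : V} (p : T.Walk u v), p.IsPath →
        ((p.edges.map ℓ').sum : ℤ) ≤ ((p.edges.map ℓ).sum : ℤ) + 2 := by
    intro ℓ ℓ' h0 h1 u v p hp
    have hnd : p.edges.Nodup := hp.edges_nodup
    have hsum' : ∀ f : Sym2 V → ℕ,
        ((p.edges.map f).sum : ℤ) = ∑ e ∈ p.edges.toFinset, (f e : ℤ) := by
      intro f
      rw [← List.sum_toFinset f hnd]
      push_cast
      rfl
    rw [hsum' ℓ, hsum' ℓ']
    have habs : |∑ e ∈ p.edges.toFinset, ((ℓ' e : ℤ) - ℓ e)| ≤ 2 := by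
      calc |∑ e ∈ p.edges.toFinset, ((ℓ' e : ℤ) - ℓ e)|
          ≤ ∑ e ∈ p.edges.toFinset, |(ℓ' e : ℤ) - ℓ e| :=
            Finset.abs_sum_le_sum_abs _ _
        _ = ∑ e ∈ p.edges.toFinset.filter (· ∈ edgeCut T X), |(ℓ' e : ℤ) - ℓ e| := by
            rw [Finset.sum_filter_of_ne]
            intro e _ hne'
            by_contra hc
            apply hne'
            rw [h0 e hc]
            simp
        _ ≤ ∑ e ∈ p.edges.toFinset.filter (· ∈ edgeCut T X), 1 := by
            apply Finset.sum_le_sum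
            intro e he
            have hcut := (Finset.mem_filter.1 he).2
            obtain ⟨ha, hb⟩ := h1 e hcut
            rw [abs_le]; exact ⟨by linarith, ha⟩
        _ = (p.edges.toFinset.filter (· ∈ edgeCut T X)).card := by simp
        _ = {e ∈ edgeCut T X | e ∈ p.edges}.ncard := by
            have hseteq : (↑(p.edges.toFinset.filter (· ∈ edgeCut T X)) : Set (Sym2 V))
                = {e ∈ edgeCut T X | e ∈ p.edges} := by
              ext e
              simp [Finset.mem_filter, List.mem_toFinset, and_comm]
            rw [← hseteq, Set.ncard_coe_finset]
        _ ≤ 2 := by exact_mod_cast Nat.cast_le.2 (part1 u v p hp)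
    rw [Finset.sum_sub_distrib] at habs
    have := (abs_le.1 habs).2
    linarith
  intro ℓ ℓ' h0 h1
  have h0' : ∀ e ∉ edgeCut T X, ℓ e = ℓ' e := fun e he => (h0 e he).symm
  have h1' : ∀ e ∈ edgeCut T X, ((ℓ e : ℤ) - ℓ' e ≤ 1 ∧ (ℓ' e : ℤ) - ℓ e ≤ 1) :=
    fun e he => ⟨(h1 e he).2, (h1 e he).1⟩
  have key : ∀ (ℓ ℓ' : Sym2 V → ℕ),
      (∀ e ∉ edgeCut T X, ℓ' e = ℓ e) →
      (∀ e ∈ edgeCut T X, ((ℓ' e : ℤ) - ℓ e ≤ 1 ∧ (ℓ e : ℤ) - ℓ' e ≤ 1)) →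
      wDiam T ℓ' ≤ wDiam T ℓ + 2 := by
    intro ℓ ℓ' h0 h1
    unfold wDiam
    apply csSup_le (hne ℓ')
    rintro L ⟨u, v, p, hp, rfl⟩
    have h2 : ((p.edges.map ℓ').sum : ℤ) ≤ ((p.edges.map ℓ).sum : ℤ) + 2 :=
      hsum ℓ ℓ' h0 h1 p hp
    have h3 : (p.edges.map ℓ).sum ≤ sSup {L : ℕ | ∃ (u v : V) (p : T.Walk u v),
        p.IsPath ∧ L = (p.edges.map ℓ).sum} :=
      le_csSup (hbdd ℓ) ⟨u, v, p, hp, rfl⟩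
    omega
  have k1 := key ℓ ℓ' h0 h1
  have k2 := key ℓ' ℓ h0' h1'
  rw [abs_le]
  omega
end

section
/- In the planar hardness reduction, if the symmetric difference M △ N of the constructed perfect matchings consists of more than one cycle, then the shortest reconfiguration length t* satisfies t* ≥ 2. Moreover, in the constructed instance, if t* = 2 with middle matching M' = M △ C and C is not a single gadget 4-cycle, then the set F = {e ∈ E(H) : the subdivision edge u_e v_e lies in C} forms a Hamiltonian cycle of H. -/
open SimpleGraph

variable {V : Type*}

/-- `M` is (the edge set of) a perfect matching of `G`: a set of edges of `G`
such that every vertex lies on exactly one edge of `M`. -/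
def IsPM (G : SimpleGraph V) (M : Set (Sym2 V)) : Prop :=
  M ⊆ G.edgeSet ∧ ∀ v : V, ∃! e, e ∈ M ∧ v ∈ e

/-- `C` is the edge set of an `M`-alternating cycle of `G`: a cycle whose edges
alternately belong to `M` and to its complement (cyclically). -/
def IsAltCycle (G : SimpleGraph V) (M C : Set (Sym2 V)) : Prop :=
  ∃ (v : V) (c : G.Walk v v), c.IsCycle ∧ C = {e | e ∈ c.edges} ∧
    List.Chain' (fun e f => ¬(e ∈ M ↔ f ∈ M)) c.edges ∧
    ∀ e f, c.edges.head? = some e → c.edges.getLast? = some f → ¬(e ∈ M ↔ f ∈ M)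

/-- One reconfiguration step of the alternating cycle model. -/
def Step (G : SimpleGraph V) (M N : Set (Sym2 V)) : Prop :=
  ∃ C, IsAltCycle G M C ∧ N = symmDiff M C

/-- A reconfiguration sequence of length `t` of perfect matchings between `M` and `N`,
each consecutive pair differing by flipping one alternating cycle. -/
def ReconSeq (G : SimpleGraph V) (M N : Set (Sym2 V)) (t : ℕ) : Prop :=
  ∃ f : ℕ → Set (Sym2 V), f 0 = M ∧ f t = N ∧
    (∀ i < t, Step G (f i) (f (i + 1))) ∧ ∀ i ≤ t, IsPM G (f i)

/-- The shortest reconfiguration length. -/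
noncomputable def OPTlen (G : SimpleGraph V) (M N : Set (Sym2 V)) : ℕ :=
  sInf {t | ReconSeq G M N t}

/-- `t` is the shortest reconfiguration length between `M` and `N`. -/
def IsOPT (G : SimpleGraph V) (M N : Set (Sym2 V)) (t : ℕ) : Prop :=
  ReconSeq G M N t ∧ ∀ s, ReconSeq G M N s → t ≤ s

open Sum

/-- Vertices of the reduced graph: for each vertex `v` of `H` the eight gadget
vertices `v₁, …, v₈` (indexed by `Fin 8`, zero-based), and for each incidence
`(u, e)` with `u ∈ e` a subdivision vertex `u_e`. -/
abbrev RedV (V : Type*) : Type _ := (V × Fin 8) ⊕ (V × Sym2 V)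

/-- The gadget edges `v₁v₂, v₂v₃, v₃v₄, v₄v₁, v₄v₅, v₅v₇, v₃v₆, v₆v₈`
(zero-based indices). -/
def gadgetPairs : List (Fin 8 × Fin 8) :=
  [(0, 1), (1, 2), (2, 3), (3, 0), (3, 4), (4, 6), (2, 5), (5, 7)]

/-- `ord` lists, for each vertex `v` of `H`, its three incident edges
`e⁽¹⁾_v, e⁽²⁾_v, e⁽³⁾_v` (in the order given by the planar embedding). -/
def ValidOrd (H : SimpleGraph V) (ord : V → Fin 3 → Sym2 V) : Prop :=
  ∀ v : V, (∀ i, v ∈ ord v i ∧ ord v i ∈ H.edgeSet) ∧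
    Function.Injective (ord v) ∧ ∀ e ∈ H.edgeSet, v ∈ e → ∃ i, ord v i = e

/-- Edges of the reduced graph: gadget edges, connection edges
`v₇v_{e⁽¹⁾}, v₇v_{e⁽²⁾}, v₈v_{e⁽²⁾}, v₈v_{e⁽³⁾}`, and middle (subdivision)
edges `u_e v_e` for each edge `e = uv` of `H`. -/
def redEdges (H : SimpleGraph V) (ord : V → Fin 3 → Sym2 V) :
    Set (Sym2 (RedV V)) :=
  {x | ∃ (v : V) (p : Fin 8 × Fin 8), p ∈ gadgetPairs ∧
        x = s(inl (v, p.1), inl (v, p.2))} ∪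
  {x | ∃ v : V,
        x = s(inl (v, (6 : Fin 8)), inr (v, ord v 0)) ∨
        x = s(inl (v, (6 : Fin 8)), inr (v, ord v 1)) ∨
        x = s(inl (v, (7 : Fin 8)), inr (v, ord v 1)) ∨
        x = s(inl (v, (7 : Fin 8)), inr (v, ord v 2))} ∪
  {x | ∃ e ∈ H.edgeSet, ∃ u w : V, u ∈ e ∧ w ∈ e ∧ u ≠ w ∧
        x = s(inr (u, e), inr (w, e))}

/-- The reduced graph `G`. -/
def redGraph (H : SimpleGraph V) (ord : V → Fin 3 → Sym2 V) :
    SimpleGraph (RedV V) :=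
  SimpleGraph.fromEdgeSet (redEdges H ord)

/-- The set of middle (subdivision) edges. -/
def midEdges (H : SimpleGraph V) : Set (Sym2 (RedV V)) :=
  {x | ∃ e ∈ H.edgeSet, ∃ u w : V, u ∈ e ∧ w ∈ e ∧ u ≠ w ∧
        x = s(inr (u, e), inr (w, e))}

/-- The initial perfect matching `M`: edges `v₁v₂, v₃v₄, v₅v₇, v₆v₈` of every
gadget, together with all middle edges. -/
def redM (H : SimpleGraph V) : Set (Sym2 (RedV V)) :=
  {x | ∃ v : V,
        x = s(inl (v, (0 : Fin 8)), inl (v, (1 : Fin 8))) ∨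
        x = s(inl (v, (2 : Fin 8)), inl (v, (3 : Fin 8))) ∨
        x = s(inl (v, (4 : Fin 8)), inl (v, (6 : Fin 8))) ∨
        x = s(inl (v, (5 : Fin 8)), inl (v, (7 : Fin 8)))} ∪ midEdges H

/-- The target perfect matching `N`: edges `v₁v₄, v₂v₃, v₅v₇, v₆v₈` of every
gadget, together with all middle edges. -/
def redN (H : SimpleGraph V) : Set (Sym2 (RedV V)) :=
  {x | ∃ v : V,
        x = s(inl (v, (0 : Fin 8)), inl (v, (3 : Fin 8))) ∨
        x = s(inl (v, (1 : Fin 8)), inl (v, (2 : Fin 8))) ∨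
        x = s(inl (v, (4 : Fin 8)), inl (v, (6 : Fin 8))) ∨
        x = s(inl (v, (5 : Fin 8)), inl (v, (7 : Fin 8)))} ∪ midEdges H

/-- The gadget 4-cycle `C_v` on `v₁v₂v₃v₄`. -/
def gadget4Cycle (v : V) : Set (Sym2 (RedV V)) :=
  {s(inl (v, (0 : Fin 8)), inl (v, (1 : Fin 8))),
   s(inl (v, (1 : Fin 8)), inl (v, (2 : Fin 8))),
   s(inl (v, (2 : Fin 8)), inl (v, (3 : Fin 8))),
   s(inl (v, (3 : Fin 8)), inl (v, (0 : Fin 8)))}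

open SimpleGraph Walk
namespace CycleAux
variable {W : Type*} {G : SimpleGraph W}

-- copy of A for testing appended separately later


variable {W : Type*} {G : SimpleGraph W}

lemma edges_getElem {x y : W} (p : G.Walk x y) (i : ℕ) (hi : i < p.length) :
    p.edges[i]'(by simpa [length_edges] using hi) = s(p.getVert i, p.getVert (i + 1)) := by
  induction p generalizing i with
  | nil => simp at hi
  | cons h q ih =>
    cases i with
    | zero => simp [Walk.edges_cons, Walk.getVert_zero, Walk.getVert_cons_succ]
    | succ n =>
      simp only [Walk.edges_cons, Walk.getVert_cons_succ, List.getElem_cons_succ]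
      exact ih n (by simpa using hi)

lemma support_getElem {x y : W} (p : G.Walk x y) (i : ℕ) (hi : i ≤ p.length) :
    p.support[i]'(by simp [length_support]; omega) = p.getVert i := by
  induction p generalizing i with
  | nil =>
    have : i = 0 := by simpa using hi
    subst this; simp
  | cons h q ih =>
    cases i with
    | zero => simp
    | succ n =>
      simp only [Walk.support_cons, Walk.getVert_cons_succ, List.getElem_cons_succ]
      exact ih n (by simpa using hi)

variable {v : W} {c : G.Walk v v}

lemma cycle_getVert_inj (hc : c.IsCycle) {i j : ℕ} (hi : i < c.length) (hj : j < c.length)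
    (h : c.getVert i = c.getVert j) : i = j := by
  have h3 := hc.three_le_length
  have hnd : c.support.tail.Nodup := ((Walk.isCycle_def c).mp hc).2.2
  have hlen : c.support.tail.length = c.length := by
    simp [List.length_tail, length_support]
  have tailinj : ∀ a b : ℕ, 1 ≤ a → a ≤ c.length → 1 ≤ b → b ≤ c.length →
      c.getVert a = c.getVert b → a = b := by
    intro a b h1a ha h1b hb hab
    have ha' : a - 1 < c.support.tail.length := by omega
    have hb' : b - 1 < c.support.tail.length := by omega
    have ea : c.support.tail[a-1]'ha' = c.getVert a := by
      rw [List.getElem_tail]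
      have : a - 1 + 1 = a := by omega
      simp_rw [this]
      exact support_getElem c a ha
    have eb : c.support.tail[b-1]'hb' = c.getVert b := by
      rw [List.getElem_tail]
      have : b - 1 + 1 = b := by omega
      simp_rw [this]
      exact support_getElem c b hb
    have := (hnd.getElem_inj_iff (hi := ha') (hj := hb')).mp (by rw [ea, eb, hab])
    omega
  rcases Nat.eq_zero_or_pos i with rfl | hi1
  · rcases Nat.eq_zero_or_pos j with rfl | hj1
    · rfl
    · exfalso
      have : c.getVert c.length = c.getVert j := by
        rw [Walk.getVert_length, ← h]
        exact (Walk.getVert_zero c).symm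
      have := tailinj c.length j (by omega) le_rfl hj1 (by omega) this
      omega
  · rcases Nat.eq_zero_or_pos j with rfl | hj1
    · exfalso
      have : c.getVert i = c.getVert c.length := by
        rw [Walk.getVert_length, h]
        exact Walk.getVert_zero c
      have := tailinj i c.length hi1 (by omega) (by omega) le_rfl this
      omega
    · exact tailinj i j hi1 (by omega) hj1 (by omega) h

/-- previous index in the cyclic order -/
def prevIdx (c : G.Walk v v) (k : ℕ) : ℕ := if k = 0 then c.length - 1 else k - 1

lemma prevIdx_lt (hc : c.IsCycle) {k : ℕ} (_ : k < c.length) : prevIdx c k < c.length := by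
  have := hc.three_le_length; unfold prevIdx; split <;> omega

lemma getVert_prevIdx_succ (hc : c.IsCycle) {k : ℕ} (hk : k < c.length) :
    c.getVert (prevIdx c k + 1) = c.getVert k := by
  have h3 := hc.three_le_length
  unfold prevIdx
  split
  · subst k
    have : c.length - 1 + 1 = c.length := by omega
    rw [this, Walk.getVert_length, Walk.getVert_zero]
  · have : k - 1 + 1 = k := by omega
    rw [this]

lemma adj_elim (hc : c.IsCycle) {x y : W} {k : ℕ} (hk : k < c.length) (hx : c.getVert k = x)
    (h : c.toSubgraph.Adj x y) :
    (y = c.getVert (k + 1) ∧ s(x, y) = c.edges[k]'(by simpa [length_edges] using hk)) ∨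
    (y = c.getVert (prevIdx c k) ∧
      s(x, y) = c.edges[prevIdx c k]'(by simpa [length_edges] using prevIdx_lt hc hk)) := by
  have h3 := hc.three_le_length
  rw [toSubgraph_adj_iff] at h
  obtain ⟨i, heq, hilt⟩ := h
  rw [Sym2.eq_iff] at heq
  rcases heq with ⟨hl, hr⟩ | ⟨hl, hr⟩
  · -- getVert i = x, getVert (i+1) = y
    have : i = k := cycle_getVert_inj hc hilt hk (by rw [hl, hx])
    subst this
    left
    refine ⟨hr.symm, ?_⟩
    rw [edges_getElem c i hilt, hl, hr]
  · -- getVert i = y, getVert (i+1) = x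
    right
    have hiprev : i = prevIdx c k := by
      rcases Nat.lt_or_ge (i+1) c.length with h1 | h1
      · have : i + 1 = k := cycle_getVert_inj hc h1 hk (by rw [hr, hx])
        unfold prevIdx
        split
        · omega
        · omega
      · have hin : i + 1 = c.length := by omega
        have hx0 : c.getVert 0 = x := by
          rw [Walk.getVert_zero, ← Walk.getVert_length c, ← hin, hr]
        have : k = 0 := cycle_getVert_inj hc hk (show (0:ℕ) < c.length by omega)
          (by rw [hx]; exact hx0.symm)
        unfold prevIdx
        simp [this]
        omega
    subst hiprev
    refine ⟨hl.symm, ?_⟩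
    rw [edges_getElem c _ hilt, hl, getVert_prevIdx_succ hc hk, hx, Sym2.eq_swap]

lemma exists_getVert_lt (hc : c.IsCycle) {x : W} (hx : x ∈ c.support) :
    ∃ k, k < c.length ∧ c.getVert k = x := by
  have h3 := hc.three_le_length
  obtain ⟨k, hk, hkle⟩ := mem_support_iff_exists_getVert.mp hx
  rcases Nat.lt_or_ge k c.length with h | h
  · exact ⟨k, h, hk⟩
  · refine ⟨0, by omega, ?_⟩
    rw [Walk.getVert_zero, ← Walk.getVert_length c, ← hk]
    congr 1
    omega

lemma nbrs_exist (hc : c.IsCycle) {x : W} (hx : x ∈ c.support) :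
    ∃ y z, y ≠ z ∧ c.toSubgraph.Adj x y ∧ c.toSubgraph.Adj x z := by
  have h3 := hc.three_le_length
  obtain ⟨k, hk, hkx⟩ := exists_getVert_lt hc hx
  refine ⟨c.getVert (k + 1), c.getVert (prevIdx c k), ?_, ?_, ?_⟩
  · intro heq
    rcases Nat.lt_or_ge (k+1) c.length with h1 | h1
    · have := cycle_getVert_inj hc h1 (prevIdx_lt hc hk) heq
      unfold prevIdx at this
      split at this <;> omega
    · have hk1 : k + 1 = c.length := by omega
      have h0 : c.getVert (k+1) = c.getVert 0 := by
        rw [hk1, Walk.getVert_length, Walk.getVert_zero]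
      rw [h0] at heq
      have := cycle_getVert_inj hc (by omega) (prevIdx_lt hc hk) heq
      unfold prevIdx at this
      split at this <;> omega
  · rw [← hkx]; exact toSubgraph_adj_getVert c hk
  · have := toSubgraph_adj_getVert c (prevIdx_lt hc hk)
    rw [getVert_prevIdx_succ hc hk, hkx] at this
    exact this.symm

lemma nbrs_le_two (hc : c.IsCycle) {x y z w : W} (hy : c.toSubgraph.Adj x y)
    (hz : c.toSubgraph.Adj x z) (hyz : y ≠ z) (hw : c.toSubgraph.Adj x w) :
    w = y ∨ w = z := by
  obtain ⟨k, hk, hkx⟩ := exists_getVert_lt hc (by rw [← mem_verts_toSubgraph]; exact hy.fst_mem)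
  rcases adj_elim hc hk hkx hy with ⟨hy1, _⟩ | ⟨hy1, _⟩ <;>
    rcases adj_elim hc hk hkx hz with ⟨hz1, _⟩ | ⟨hz1, _⟩ <;>
      rcases adj_elim hc hk hkx hw with ⟨hw1, _⟩ | ⟨hw1, _⟩ <;>
        simp_all

lemma alt_at {M : Set (Sym2 W)} (hc : c.IsCycle)
    (hchain : List.Chain' (fun e f => ¬(e ∈ M ↔ f ∈ M)) c.edges)
    (hends : ∀ e f, c.edges.head? = some e → c.edges.getLast? = some f → ¬(e ∈ M ↔ f ∈ M))
    {x y z : W} (hy : c.toSubgraph.Adj x y) (hz : c.toSubgraph.Adj x z) (hyz : y ≠ z) :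
    ¬(s(x, y) ∈ M ↔ s(x, z) ∈ M) := by
  have h3 := hc.three_le_length
  have hlen : c.edges.length = c.length := length_edges c
  obtain ⟨k, hk, hkx⟩ := exists_getVert_lt hc (by rw [← mem_verts_toSubgraph]; exact hy.fst_mem)
  have hpk := prevIdx_lt hc hk
  have key : ¬(c.edges[prevIdx c k]'(by omega) ∈ M ↔ c.edges[k]'(by omega) ∈ M) := by
    by_cases h0 : k = 0
    · subst h0
      have hne : c.edges ≠ [] := by
        intro h; rw [h] at hlen; simp at hlen; omega
      have hhead : c.edges.head? = some (c.edges[0]'(by omega)) := by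
        rw [List.head?_eq_getElem?, List.getElem?_eq_getElem]
      have hlast : c.edges.getLast? = some (c.edges[c.edges.length - 1]'(by omega)) := by
        rw [List.getLast?_eq_getElem?, List.getElem?_eq_getElem]
      have hmain := hends _ _ hhead hlast
      unfold prevIdx
      simp only [if_pos rfl]
      have hco : c.edges.length - 1 = c.length - 1 := by omega
      simp_rw [hco] at hmain
      tauto
    · have hchain' := List.isChain_iff_getElem.mp hchain (k-1) (by omega)
      have e1 : prevIdx c k = k - 1 := by unfold prevIdx; simp [h0]
      have e2 : k - 1 + 1 = k := by omega
      simp_rw [e2] at hchain'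
      simp_rw [e1]
      exact hchain'
  rcases adj_elim hc hk hkx hy with ⟨hy1, hy2⟩ | ⟨hy1, hy2⟩ <;>
    rcases adj_elim hc hk hkx hz with ⟨hz1, hz2⟩ | ⟨hz1, hz2⟩
  · exact absurd (hy1.trans hz1.symm) hyz
  · rw [hy2, hz2]; tauto
  · rw [hy2, hz2]; tauto
  · exact absurd (hy1.trans hz1.symm) hyz

lemma reach_closed {S : G.Subgraph} {T : Set W}
    (hT : ∀ a ∈ T, ∀ b, S.Adj a b → b ∈ T) :
    ∀ {s t : S.verts} (_ : S.coe.Walk s t), ↑s ∈ T → ↑t ∈ T := by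
  intro s t p
  induction p with
  | nil => exact id
  | @cons a b t h q ih =>
    intro hs
    exact ih (hT _ hs _ (by rwa [Subgraph.coe_adj] at h))

lemma verts_subset_of_closed {S : G.Subgraph} (hS : S.Connected) {T : Set W}
    (hT : ∀ a ∈ T, ∀ b, S.Adj a b → b ∈ T) {a : W} (ha : a ∈ T) (haS : a ∈ S.verts) :
    ∀ b ∈ S.verts, b ∈ T := by
  intro b hb
  obtain ⟨p⟩ := hS.preconnected ⟨a, haS⟩ ⟨b, hb⟩
  exact reach_closed hT p ha

lemma quad (hc : c.IsCycle) {x0 x1 x2 x3 : W} (d02 : x0 ≠ x2) (d13 : x1 ≠ x3)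
    (h01 : c.toSubgraph.Adj x0 x1) (h12 : c.toSubgraph.Adj x1 x2)
    (h23 : c.toSubgraph.Adj x2 x3) (h30 : c.toSubgraph.Adj x3 x0) :
    {e | e ∈ c.edges} = {s(x0,x1), s(x1,x2), s(x2,x3), s(x3,x0)} := by
  have hT : ∀ a ∈ ({x0,x1,x2,x3} : Set W), ∀ b, c.toSubgraph.Adj a b →
      b ∈ ({x0,x1,x2,x3} : Set W) := by
    intro a ha b hab
    simp only [Set.mem_insert_iff, Set.mem_singleton_iff] at ha ⊢
    rcases ha with rfl | rfl | rfl | rfl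
    · rcases nbrs_le_two hc h01 h30.symm d13 hab with rfl | rfl <;> tauto
    · rcases nbrs_le_two hc h12 h01.symm (Ne.symm d02) hab with rfl | rfl <;> tauto
    · rcases nbrs_le_two hc h23 h12.symm (Ne.symm d13) hab with rfl | rfl <;> tauto
    · rcases nbrs_le_two hc h30 h23.symm d02 hab with rfl | rfl <;> tauto
  have hverts := verts_subset_of_closed (c.toSubgraph_connected) hT
    (show x0 ∈ ({x0,x1,x2,x3} : Set W) by simp) h01.fst_mem
  ext e
  simp only [Set.mem_setOf_eq, Set.mem_insert_iff, Set.mem_singleton_iff]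
  constructor
  · intro he
    have : e ∈ c.toSubgraph.edgeSet := by rw [edgeSet_toSubgraph]; exact he
    induction e with
    | h a b =>
      rw [Subgraph.mem_edgeSet] at this
      have haT := hverts a this.fst_mem
      simp only [Set.mem_insert_iff, Set.mem_singleton_iff] at haT
      rcases haT with rfl | rfl | rfl | rfl
      · rcases nbrs_le_two hc h01 h30.symm d13 this with rfl | rfl
        · tauto
        · right; right; right; rw [Sym2.eq_swap]
      · rcases nbrs_le_two hc h12 h01.symm (Ne.symm d02) this with rfl | rfl
        · tauto
        · left; rw [Sym2.eq_swap]
      · rcases nbrs_le_two hc h23 h12.symm (Ne.symm d13) this with rfl | rfl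
        · tauto
        · right; left; rw [Sym2.eq_swap]
      · rcases nbrs_le_two hc h30 h23.symm d02 this with rfl | rfl
        · right; right; right; rfl
        · right; right; left; rw [Sym2.eq_swap]
  · intro he
    have key : ∀ a b : W, c.toSubgraph.Adj a b → s(a,b) ∈ c.edges := by
      intro a b hab
      have : s(a,b) ∈ c.toSubgraph.edgeSet := Subgraph.mem_edgeSet.mpr hab
      rwa [edgeSet_toSubgraph] at this
    rcases he with rfl | rfl | rfl | rfl
    · exact key _ _ h01
    · exact key _ _ h12
    · exact key _ _ h23
    · exact key _ _ h30

/-- the `i`-th edge of a walk -/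
def edgeAt {x y : W} (t : G.Walk x y) (p : ℕ) : Sym2 W := s(t.getVert p, t.getVert (p+1))

lemma edgeAt_mem {x y : W} {t : G.Walk x y} {p : ℕ} (hp : p < t.length) :
    edgeAt t p ∈ t.edges := by
  rw [edgeAt, ← edges_getElem t p hp]
  exact List.getElem_mem _

lemma edgeAt_inj {x y : W} {t : G.Walk x y} (ht : t.IsTrail) {p q : ℕ}
    (hp : p < t.length) (hq : q < t.length) (h : edgeAt t p = edgeAt t q) : p = q := by
  rw [edgeAt, edgeAt, ← edges_getElem t p hp, ← edges_getElem t q hq] at h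
  exact (ht.edges_nodup.getElem_inj_iff).mp h

lemma closed_trail_isCycle {u : W} {t : G.Walk u u} (ht : t.IsTrail) (hnil : ¬t.Nil)
    (hdeg : ∀ (x : W) (e1 e2 e3 : Sym2 W), e1 ∈ t.edges → e2 ∈ t.edges → e3 ∈ t.edges →
      x ∈ e1 → x ∈ e2 → x ∈ e3 → e1 = e2 ∨ e1 = e3 ∨ e2 = e3) : t.IsCycle := by
  have hn1 : t.length ≠ 0 := by
    intro h; exact hnil (Walk.nil_iff_length_eq.mpr h)
  have hn2 : t.length ≠ 1 := by
    intro h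
    have := t.adj_getVert_succ (i := 0) (by omega)
    rw [Walk.getVert_zero] at this
    have h1 : t.getVert 1 = u := by rw [← h]; exact t.getVert_length
    rw [h1] at this
    exact G.irrefl this
  have hn3 : t.length ≠ 2 := by
    intro h
    have he : edgeAt t 0 = edgeAt t 1 := by
      rw [edgeAt, edgeAt]
      have h2 : t.getVert 2 = u := by rw [← h]; exact t.getVert_length
      rw [Walk.getVert_zero, h2, Sym2.eq_swap]
    have := edgeAt_inj ht (by omega) (by omega) he
    omega
  have h3 : 3 ≤ t.length := by omega
  rw [Walk.isCycle_def]
  refine ⟨ht, ?_, ?_⟩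
  · intro h; apply hnil; rw [h]; exact Walk.Nil.nil
  · rw [List.nodup_iff_injective_get]
    rintro ⟨i, hi⟩ ⟨j, hj⟩ hij
    simp only [List.get_eq_getElem] at hij
    have hlen : t.support.tail.length = t.length := by
      simp [List.length_tail, length_support]
    by_contra hne
    have hne' : i ≠ j := by intro h; exact hne (by simp [h])
    -- wlog i < j
    have main : ∀ a b : ℕ, 1 ≤ a → a < b → b ≤ t.length → t.getVert a = t.getVert b → False := by
      intro a b h1a hab hb hgv
      set x := t.getVert a with hxdef
      have memL : ∀ p, p < t.length → t.getVert p = x → x ∈ edgeAt t p := by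
        intro p hp hpx; rw [edgeAt, Sym2.mem_iff]; left; exact hpx.symm
      have memR : ∀ p, p < t.length → t.getVert (p+1) = x → x ∈ edgeAt t p := by
        intro p hp hpx; rw [edgeAt, Sym2.mem_iff]; right; exact hpx.symm
      -- find three distinct positions p < q < r, each < length, with x in each edge
      obtain ⟨p, q, r, hpq, hqr, hr, hxp, hxq, hxr⟩ :
          ∃ p q r, p < q ∧ q < r ∧ r < t.length ∧
            x ∈ edgeAt t p ∧ x ∈ edgeAt t q ∧ x ∈ edgeAt t r := by
        by_cases hbn : b < t.length
        · refine ⟨a - 1, a, b, by omega, hab, hbn, ?_, ?_, ?_⟩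
          · exact memR _ (by omega) (by rw [show a - 1 + 1 = a by omega])
          · exact memL _ (by omega) rfl
          · exact memL _ hbn hgv.symm
        · have hbn' : b = t.length := by omega
          have hx0 : t.getVert 0 = x := by
            rw [Walk.getVert_zero, ← t.getVert_length, ← hbn', hgv]
          by_cases ha1 : a = 1
          · refine ⟨0, 1, t.length - 1, by omega, by omega, by omega, ?_, ?_, ?_⟩
            · exact memL _ (by omega) hx0
            · exact memL _ (by omega) (by rw [← ha1])
            · exact memR _ (by omega) (by
                rw [show t.length - 1 + 1 = t.length by omega, t.getVert_length,
                  ← Walk.getVert_zero t, hx0])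
          · refine ⟨0, a - 1, a, by omega, by omega, by omega, ?_, ?_, ?_⟩
            · exact memL _ (by omega) hx0
            · exact memR _ (by omega) (by rw [show a - 1 + 1 = a by omega])
            · exact memL _ (by omega) rfl
      have d1 : edgeAt t p ≠ edgeAt t q := by
        intro h; have := edgeAt_inj ht (by omega) (by omega) h; omega
      have d2 : edgeAt t p ≠ edgeAt t r := by
        intro h; have := edgeAt_inj ht (by omega) hr h; omega
      have d3 : edgeAt t q ≠ edgeAt t r := by
        intro h; have := edgeAt_inj ht (by omega) hr h; omega
      rcases hdeg x _ _ _ (edgeAt_mem (by omega)) (edgeAt_mem (by omega)) (edgeAt_mem hr)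
        hxp hxq hxr with h | h | h
      · exact d1 h
      · exact d2 h
      · exact d3 h
    have gva : t.support.tail[i] = t.getVert (i+1) := by
      rw [List.getElem_tail]
      exact support_getElem t (i+1) (by omega)
    have gvb : t.support.tail[j] = t.getVert (j+1) := by
      rw [List.getElem_tail]
      exact support_getElem t (j+1) (by omega)
    rcases Nat.lt_or_ge i j with h | h
    · exact main (i+1) (j+1) (by omega) (by omega) (by omega) (by rw [← gva, ← gvb, hij])
    · have : j < i := by omega
      exact main (j+1) (i+1) (by omega) (by omega) (by omega) (by rw [← gva, ← gvb, hij])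

end CycleAux

namespace RedAux

variable {V : Type*} {H : SimpleGraph V} {ord : V → Fin 3 → Sym2 V}

lemma sym2_eq_of_mem {α : Type*} {e : Sym2 α} {u w : α} (hu : u ∈ e) (hw : w ∈ e)
    (huw : u ≠ w) : e = s(u, w) := by
  induction e with
  | h a b =>
    rw [Sym2.mem_iff] at hu hw
    rcases hu with rfl | rfl <;> rcases hw with rfl | rfl
    · exact absurd rfl huw
    · rfl
    · rw [Sym2.eq_swap]
    · exact absurd rfl huw

lemma redAdj_inl_elim {v : V} {i : Fin 8} {z : RedV V}
    (h : (redGraph H ord).Adj (Sum.inl (v, i)) z) :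
    (∃ j : Fin 8, z = Sum.inl (v, j) ∧ ((i, j) ∈ gadgetPairs ∨ (j, i) ∈ gadgetPairs)) ∨
    (i = 6 ∧ (z = Sum.inr (v, ord v 0) ∨ z = Sum.inr (v, ord v 1))) ∨
    (i = 7 ∧ (z = Sum.inr (v, ord v 1) ∨ z = Sum.inr (v, ord v 2))) := by
  rw [redGraph, fromEdgeSet_adj] at h
  obtain ⟨hmem, -⟩ := h
  rcases hmem with (hmem | hmem) | hmem
  · obtain ⟨w, p, hp, hx⟩ := hmem
    rw [Sym2.eq_iff] at hx
    rcases hx with ⟨h1, h2⟩ | ⟨h1, h2⟩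
    · obtain ⟨hvw, hip⟩ : v = w ∧ i = p.1 := by simpa [Prod.ext_iff] using h1
      subst hvw; subst hip
      exact Or.inl ⟨p.2, h2, Or.inl (by rwa [Prod.mk.eta])⟩
    · obtain ⟨hvw, hip⟩ : v = w ∧ i = p.2 := by simpa [Prod.ext_iff] using h1
      subst hvw; subst hip
      exact Or.inl ⟨p.1, h2, Or.inr (by rwa [Prod.mk.eta])⟩
  · obtain ⟨w, hc⟩ := hmem
    rcases hc with hx | hx | hx | hx <;> rw [Sym2.eq_iff] at hx <;>
      rcases hx with ⟨h1, h2⟩ | ⟨h1, h2⟩ <;> simp_all [Prod.ext_iff] <;> tauto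
  · obtain ⟨e, he, u, w, hu, hw, huw, hx⟩ := hmem
    rw [Sym2.eq_iff] at hx
    rcases hx with ⟨h1, _⟩ | ⟨h1, _⟩ <;> simp_all

lemma redAdj_inr_elim {v : V} {e : Sym2 V} {z : RedV V}
    (h : (redGraph H ord).Adj (Sum.inr (v, e)) z) :
    (z = Sum.inl (v, 6) ∧ (e = ord v 0 ∨ e = ord v 1)) ∨
    (z = Sum.inl (v, 7) ∧ (e = ord v 1 ∨ e = ord v 2)) ∨
    (∃ w, e ∈ H.edgeSet ∧ v ∈ e ∧ w ∈ e ∧ w ≠ v ∧ z = Sum.inr (w, e)) := by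
  rw [redGraph, fromEdgeSet_adj] at h
  obtain ⟨hmem, -⟩ := h
  rcases hmem with (hmem | hmem) | hmem
  · obtain ⟨w, p, hp, hx⟩ := hmem
    rw [Sym2.eq_iff] at hx
    rcases hx with ⟨h1, h2⟩ | ⟨h1, h2⟩ <;> simp_all
  · obtain ⟨w, hc⟩ := hmem
    rcases hc with hx | hx | hx | hx <;> rw [Sym2.eq_iff] at hx <;>
      rcases hx with ⟨h1, h2⟩ | ⟨h1, h2⟩ <;> simp_all [Prod.ext_iff] <;> tauto
  · obtain ⟨e', he', u, w, hu, hw, huw, hx⟩ := hmem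
    rw [Sym2.eq_iff] at hx
    rcases hx with ⟨h1, h2⟩ | ⟨h1, h2⟩
    · obtain ⟨hvu, hee⟩ : u = v ∧ e' = e := by simpa [Prod.ext_iff] using h1.symm
      subst hvu; subst hee
      exact Or.inr (Or.inr ⟨w, he', hu, hw, fun hc => huw hc.symm, h2⟩)
    · obtain ⟨hvw, hee⟩ : w = v ∧ e' = e := by simpa [Prod.ext_iff] using h1.symm
      subst hvw; subst hee
      exact Or.inr (Or.inr ⟨u, he', hw, hu, huw, h2⟩)

lemma mixed_not_mem_redM {a : V × Fin 8} {b : V × Sym2 V} :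
    s(Sum.inl a, Sum.inr b) ∉ redM H := by
  rintro (⟨v, hv⟩ | ⟨e, he, u, w, hu, hw, huw, hx⟩)
  · rcases hv with hx | hx | hx | hx <;> rw [Sym2.eq_iff] at hx <;> simp_all
  · rw [Sym2.eq_iff] at hx; simp_all

lemma mixed_not_mem_redN {a : V × Fin 8} {b : V × Sym2 V} :
    s(Sum.inl a, Sum.inr b) ∉ redN H := by
  rintro (⟨v, hv⟩ | ⟨e, he, u, w, hu, hw, huw, hx⟩)
  · rcases hv with hx | hx | hx | hx <;> rw [Sym2.eq_iff] at hx <;> simp_all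
  · rw [Sym2.eq_iff] at hx; simp_all

lemma inl_inl_mem_redM_elim {v w : V} {i j : Fin 8}
    (h : s(Sum.inl (v,i), Sum.inl (w,j)) ∈ redM H) : v = w ∧
      ((i,j) ∈ ([(0,1),(2,3),(4,6),(5,7)] : List (Fin 8 × Fin 8)) ∨
       (j,i) ∈ ([(0,1),(2,3),(4,6),(5,7)] : List (Fin 8 × Fin 8))) := by
  rcases h with ⟨u, hu⟩ | ⟨e, he, a, b, ha, hb, hab, hx⟩
  · rcases hu with hx | hx | hx | hx <;> rw [Sym2.eq_iff] at hx <;>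
      rcases hx with ⟨h1, h2⟩ | ⟨h1, h2⟩ <;> simp_all [Prod.ext_iff] <;> tauto
  · rw [Sym2.eq_iff] at hx; simp_all

lemma inl_inl_mem_redN_elim {v w : V} {i j : Fin 8}
    (h : s(Sum.inl (v,i), Sum.inl (w,j)) ∈ redN H) : v = w ∧
      ((i,j) ∈ ([(0,3),(1,2),(4,6),(5,7)] : List (Fin 8 × Fin 8)) ∨
       (j,i) ∈ ([(0,3),(1,2),(4,6),(5,7)] : List (Fin 8 × Fin 8))) := by
  rcases h with ⟨u, hu⟩ | ⟨e, he, a, b, ha, hb, hab, hx⟩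
  · rcases hu with hx | hx | hx | hx <;> rw [Sym2.eq_iff] at hx <;>
      rcases hx with ⟨h1, h2⟩ | ⟨h1, h2⟩ <;> simp_all [Prod.ext_iff] <;> tauto
  · rw [Sym2.eq_iff] at hx; simp_all

lemma redM_mem01 (v : V) : s(Sum.inl (v,(0:Fin 8)), Sum.inl (v,(1:Fin 8))) ∈ redM H :=
  Or.inl ⟨v, Or.inl rfl⟩
lemma redM_mem23 (v : V) : s(Sum.inl (v,(2:Fin 8)), Sum.inl (v,(3:Fin 8))) ∈ redM H :=
  Or.inl ⟨v, Or.inr (Or.inl rfl)⟩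
lemma redM_mem46 (v : V) : s(Sum.inl (v,(4:Fin 8)), Sum.inl (v,(6:Fin 8))) ∈ redM H :=
  Or.inl ⟨v, Or.inr (Or.inr (Or.inl rfl))⟩
lemma redM_mem57 (v : V) : s(Sum.inl (v,(5:Fin 8)), Sum.inl (v,(7:Fin 8))) ∈ redM H :=
  Or.inl ⟨v, Or.inr (Or.inr (Or.inr rfl))⟩
lemma redN_mem03 (v : V) : s(Sum.inl (v,(0:Fin 8)), Sum.inl (v,(3:Fin 8))) ∈ redN H :=
  Or.inl ⟨v, Or.inl rfl⟩
lemma redN_mem12 (v : V) : s(Sum.inl (v,(1:Fin 8)), Sum.inl (v,(2:Fin 8))) ∈ redN H :=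
  Or.inl ⟨v, Or.inr (Or.inl rfl)⟩
lemma redN_mem46 (v : V) : s(Sum.inl (v,(4:Fin 8)), Sum.inl (v,(6:Fin 8))) ∈ redN H :=
  Or.inl ⟨v, Or.inr (Or.inr (Or.inl rfl))⟩
lemma redN_mem57 (v : V) : s(Sum.inl (v,(5:Fin 8)), Sum.inl (v,(7:Fin 8))) ∈ redN H :=
  Or.inl ⟨v, Or.inr (Or.inr (Or.inr rfl))⟩

lemma mid_mem_redM {e : Sym2 V} {u w : V} (he : e ∈ H.edgeSet) (hu : u ∈ e) (hw : w ∈ e)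
    (huw : u ≠ w) : s(Sum.inr (u,e), Sum.inr (w,e)) ∈ redM H :=
  Or.inr ⟨e, he, u, w, hu, hw, huw, rfl⟩

lemma mid_mem_redN {e : Sym2 V} {u w : V} (he : e ∈ H.edgeSet) (hu : u ∈ e) (hw : w ∈ e)
    (huw : u ≠ w) : s(Sum.inr (u,e), Sum.inr (w,e)) ∈ redN H :=
  Or.inr ⟨e, he, u, w, hu, hw, huw, rfl⟩

lemma symmDiff_MN (x : Sym2 (RedV V)) :
    x ∈ symmDiff (redM H) (redN H) ↔ ∃ v : V, x ∈ gadget4Cycle v := by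
  rw [Set.mem_symmDiff]
  constructor
  · rintro (⟨hm, hn⟩ | ⟨hn, hm⟩)
    · rcases hm with ⟨u, hu⟩ | hmid
      · rcases hu with hx | hx | hx | hx <;> subst hx
        · exact ⟨u, by simp [gadget4Cycle]⟩
        · exact ⟨u, by simp [gadget4Cycle]⟩
        · exact absurd (redN_mem46 u) hn
        · exact absurd (redN_mem57 u) hn
      · exact absurd (Or.inr hmid) hn
    · rcases hn with ⟨u, hu⟩ | hmid
      · rcases hu with hx | hx | hx | hx <;> subst hx
        · refine ⟨u, ?_⟩
          simp only [gadget4Cycle, Set.mem_insert_iff, Set.mem_singleton_iff]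
          right; right; right; rw [Sym2.eq_swap]
        · exact ⟨u, by simp [gadget4Cycle]⟩
        · exact absurd (redM_mem46 u) hm
        · exact absurd (redM_mem57 u) hm
      · exact absurd (Or.inr hmid) hm
  · rintro ⟨v, hv⟩
    simp only [gadget4Cycle, Set.mem_insert_iff, Set.mem_singleton_iff] at hv
    rcases hv with rfl | rfl | rfl | rfl
    · exact Or.inl ⟨redM_mem01 v, fun h => by
        have := (inl_inl_mem_redN_elim h).2; revert this; decide⟩
    · exact Or.inr ⟨redN_mem12 v, fun h => by
        have := (inl_inl_mem_redM_elim h).2; revert this; decide⟩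
    · exact Or.inl ⟨redM_mem23 v, fun h => by
        have := (inl_inl_mem_redN_elim h).2; revert this; decide⟩
    · exact Or.inr ⟨by rw [Sym2.eq_swap]; exact redN_mem03 v, fun h => by
        have := (inl_inl_mem_redM_elim h).2; revert this; decide⟩

end RedAux
namespace RedAux

variable {V : Type*} [DecidableEq V] {H : SimpleGraph V} {ord : V → Fin 3 → Sym2 V}

/-- projection to `H`'s vertices -/
def projV : RedV V → V
  | Sum.inl (v, _) => v
  | Sum.inr (v, _) => v

lemma mid_of_proj_ne {a b : RedV V}
    (h : (redGraph H ord).Adj a b) (hne : projV a ≠ projV b) :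
    ∃ u w e, a = Sum.inr (u, e) ∧ b = Sum.inr (w, e) ∧ u ∈ e ∧ w ∈ e ∧ u ≠ w ∧
      e ∈ H.edgeSet ∧ e = s(u, w) := by
  match a with
  | Sum.inl (v, i) =>
    exfalso
    rcases redAdj_inl_elim h with ⟨j, rfl, -⟩ | ⟨-, rfl | rfl⟩ | ⟨-, rfl | rfl⟩ <;>
      exact hne rfl
  | Sum.inr (v, e) =>
    rcases redAdj_inr_elim h with ⟨rfl, -⟩ | ⟨rfl, -⟩ | ⟨w, he, hv, hw, hwv, rfl⟩
    · exact absurd rfl hne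
    · exact absurd rfl hne
    · exact ⟨v, w, e, rfl, rfl, hv, hw, fun hc => hwv hc.symm, he,
        sym2_eq_of_mem hv hw (fun hc => hwv hc.symm)⟩

lemma adjProj {a b : RedV V}
    (h : (redGraph H ord).Adj a b) (hne : projV a ≠ projV b) :
    H.Adj (projV a) (projV b) := by
  obtain ⟨u, w, e, rfl, rfl, hu, hw, huw, he, hesw⟩ := mid_of_proj_ne h hne
  show H.Adj u w
  rw [← SimpleGraph.mem_edgeSet, ← hesw]
  exact he

/-- Project a walk in the reduced graph to a walk in `H`. -/
def proj : ∀ {x y : RedV V}, (redGraph H ord).Walk x y → H.Walk (projV x) (projV y)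
  | _, _, Walk.nil => Walk.nil
  | x, y, @Walk.cons _ _ _ z _ h q =>
    if hxz : projV x = projV z then (proj q).copy hxz.symm rfl
    else Walk.cons (adjProj h hxz) (proj q)

lemma proj_nil {x : RedV V} : proj (Walk.nil : (redGraph H ord).Walk x x) = Walk.nil := rfl

lemma proj_cons {x z y : RedV V} (h : (redGraph H ord).Adj x z)
    (q : (redGraph H ord).Walk z y) :
    proj (Walk.cons h q) =
      if hxz : projV x = projV z then (proj q).copy hxz.symm rfl
      else Walk.cons (adjProj h hxz) (proj q) := rfl

lemma proj_support {x y : RedV V} (p : (redGraph H ord).Walk x y) :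
    ∀ u ∈ p.support, projV u ∈ (proj p).support := by
  induction p with
  | nil => intro u hu; simp at hu; subst hu; simp [proj_nil]
  | @cons a m b h q ih =>
    intro u hu
    rw [Walk.support_cons, List.mem_cons] at hu
    rw [proj_cons]
    split
    · rename_i hxz
      rw [Walk.support_copy]
      rcases hu with rfl | hu
      · rw [hxz]
        exact (proj q).start_mem_support
      · exact ih u hu
    · rw [Walk.support_cons, List.mem_cons]
      rcases hu with rfl | hu
      · exact Or.inl rfl
      · exact Or.inr (ih u hu)

lemma proj_edges {x y : RedV V} (p : (redGraph H ord).Walk x y) (f : Sym2 V) :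
    f ∈ (proj p).edges ↔
      ∃ a b : RedV V, s(a, b) ∈ p.edges ∧ projV a ≠ projV b ∧ f = s(projV a, projV b) := by
  induction p with
  | nil =>
    simp only [proj_nil, Walk.edges_nil, List.not_mem_nil, false_iff]
    rintro ⟨a, b, hab, -, -⟩
    simp at hab
  | @cons a m b h q ih =>
    rw [proj_cons]
    split
    · rename_i hxz
      rw [Walk.edges_copy]
      rw [ih]
      constructor
      · rintro ⟨a', b', hab, hne, rfl⟩
        exact ⟨a', b', by rw [Walk.edges_cons]; exact List.mem_cons_of_mem _ hab, hne, rfl⟩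
      · rintro ⟨a', b', hab, hne, rfl⟩
        rw [Walk.edges_cons, List.mem_cons] at hab
        rcases hab with heq | hab
        · exfalso
          rw [Sym2.eq_iff] at heq
          rcases heq with ⟨rfl, rfl⟩ | ⟨rfl, rfl⟩
          · exact hne hxz
          · exact hne (hxz.symm)
        · exact ⟨a', b', hab, hne, rfl⟩
    · rename_i hxz
      rw [Walk.edges_cons, List.mem_cons, ih]
      constructor
      · rintro (rfl | ⟨a', b', hab, hne, rfl⟩)
        · exact ⟨a, m, by rw [Walk.edges_cons]; exact List.mem_cons_self, hxz, rfl⟩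
        · exact ⟨a', b', by rw [Walk.edges_cons]; exact List.mem_cons_of_mem _ hab, hne, rfl⟩
      · rintro ⟨a', b', hab, hne, rfl⟩
        rw [Walk.edges_cons, List.mem_cons] at hab
        rcases hab with heq | hab
        · rw [Sym2.eq_iff] at heq
          rcases heq with ⟨rfl, rfl⟩ | ⟨rfl, rfl⟩
          · exact Or.inl rfl
          · exact Or.inl (Sym2.eq_swap)
        · exact Or.inr ⟨a', b', hab, hne, rfl⟩

lemma mid_unique {a b x z : RedV V}
    (hab : (redGraph H ord).Adj a b) (hxz : (redGraph H ord).Adj x z)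
    (hne1 : projV a ≠ projV b) (hne2 : projV x ≠ projV z)
    (heq : s(projV a, projV b) = s(projV x, projV z)) : s(a, b) = s(x, z) := by
  obtain ⟨u, w, e, rfl, rfl, hu, hw, huw, he, hesw⟩ := mid_of_proj_ne hab hne1
  obtain ⟨u', w', e', rfl, rfl, hu', hw', huw', he', hesw'⟩ := mid_of_proj_ne hxz hne2
  simp only [projV] at heq
  have hee : e = e' := by rw [hesw, hesw', heq]
  subst hee
  rw [Sym2.eq_iff] at heq ⊢
  rcases heq with ⟨rfl, rfl⟩ | ⟨rfl, rfl⟩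
  · left; exact ⟨rfl, rfl⟩
  · right; exact ⟨rfl, rfl⟩

lemma proj_edges_nodup {x y : RedV V} (p : (redGraph H ord).Walk x y)
    (hnd : p.edges.Nodup) : (proj p).edges.Nodup := by
  induction p with
  | nil => simp [proj_nil]
  | @cons a m b h q ih =>
    rw [Walk.edges_cons] at hnd
    rw [List.nodup_cons] at hnd
    rw [proj_cons]
    split
    · rw [Walk.edges_copy]
      exact ih hnd.2
    · rename_i hxz
      rw [Walk.edges_cons, List.nodup_cons]
      refine ⟨?_, ih hnd.2⟩
      intro hmem
      rw [proj_edges] at hmem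
      obtain ⟨a', b', hab, hne, heq⟩ := hmem
      have : s(a, m) = s(a', b') :=
        mid_unique h (q.adj_of_mem_edges hab) hxz hne heq
      rw [this] at hnd
      exact hnd.1 hab
end RedAux

namespace CycleAux
variable {W : Type*} {G : SimpleGraph W} {v : W} {c : G.Walk v v}

lemma other_nbr (hc : c.IsCycle) {x y : W} (h : c.toSubgraph.Adj x y) :
    ∃ z, z ≠ y ∧ c.toSubgraph.Adj x z := by
  obtain ⟨a, b, hab, ha, hb⟩ := nbrs_exist hc ((mem_verts_toSubgraph c).mp h.fst_mem)
  by_cases hay : a = y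
  · exact ⟨b, by rw [← hay]; exact fun hb' => hab hb'.symm, hb⟩
  · exact ⟨a, hay, ha⟩

end CycleAux

namespace RedAux

open CycleAux

lemma gp0 : ∀ j : Fin 8, ((0,j) ∈ gadgetPairs ∨ (j,(0:Fin 8)) ∈ gadgetPairs) →
    j = 1 ∨ j = 3 := by decide
lemma gp1 : ∀ j : Fin 8, ((1,j) ∈ gadgetPairs ∨ (j,(1:Fin 8)) ∈ gadgetPairs) →
    j = 0 ∨ j = 2 := by decide
lemma gp2 : ∀ j : Fin 8, ((2,j) ∈ gadgetPairs ∨ (j,(2:Fin 8)) ∈ gadgetPairs) →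
    j = 1 ∨ j = 3 ∨ j = 5 := by decide
lemma gp3 : ∀ j : Fin 8, ((3,j) ∈ gadgetPairs ∨ (j,(3:Fin 8)) ∈ gadgetPairs) →
    j = 2 ∨ j = 0 ∨ j = 4 := by decide
lemma gp4 : ∀ j : Fin 8, ((4,j) ∈ gadgetPairs ∨ (j,(4:Fin 8)) ∈ gadgetPairs) →
    j = 3 ∨ j = 6 := by decide
lemma gp5 : ∀ j : Fin 8, ((5,j) ∈ gadgetPairs ∨ (j,(5:Fin 8)) ∈ gadgetPairs) →
    j = 2 ∨ j = 7 := by decide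
lemma gp6 : ∀ j : Fin 8, ((6,j) ∈ gadgetPairs ∨ (j,(6:Fin 8)) ∈ gadgetPairs) →
    j = 4 := by decide
lemma gp7 : ∀ j : Fin 8, ((7,j) ∈ gadgetPairs ∨ (j,(7:Fin 8)) ∈ gadgetPairs) →
    j = 5 := by decide

variable {V : Type*} [DecidableEq V] {H : SimpleGraph V} {ord : V → Fin 3 → Sym2 V}

lemma notM_gadget {v : V} {i j : Fin 8}
    (hij : ¬((i,j) ∈ ([(0,1),(2,3),(4,6),(5,7)] : List (Fin 8 × Fin 8)) ∨
             (j,i) ∈ ([(0,1),(2,3),(4,6),(5,7)] : List (Fin 8 × Fin 8)))) :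
    s(Sum.inl (v,i), Sum.inl (v,j)) ∉ redM H :=
  fun h => hij (inl_inl_mem_redM_elim h).2

lemma notM_conn {v : V} {i : Fin 8} {b : V × Sym2 V} :
    s(Sum.inr b, Sum.inl (v,i)) ∉ redM H := by
  rw [Sym2.eq_swap]; exact mixed_not_mem_redM

lemma gadget4_disjoint {u v : V} (huv : u ≠ v) {x : Sym2 (RedV V)}
    (hx : x ∈ gadget4Cycle u) : x ∉ gadget4Cycle v := by
  intro hy
  simp only [gadget4Cycle, Set.mem_insert_iff, Set.mem_singleton_iff] at hx hy
  rcases hx with rfl | rfl | rfl | rfl <;> rcases hy with h | h | h | h <;>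
    rw [Sym2.eq_iff] at h <;> simp_all

variable {v₀ : RedV V} {c : (redGraph H ord).Walk v₀ v₀}

section Gadget

variable (hc : c.IsCycle)
  (halt : ∀ {x y z : RedV V}, c.toSubgraph.Adj x y → c.toSubgraph.Adj x z → y ≠ z →
    ¬(s(x,y) ∈ redM H ↔ s(x,z) ∈ redM H))

include hc halt

lemma corner01 {v : V}
    (h : c.toSubgraph.Adj (Sum.inl (v,(0:Fin 8))) (Sum.inl (v,(1:Fin 8)))) :
    {e | e ∈ c.edges} = gadget4Cycle v := by
  -- at g1, other neighbor ≠ g0 must be g2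
  obtain ⟨z, hzne, hz⟩ := other_nbr hc h.symm
  rcases redAdj_inl_elim hz.adj_sub with ⟨j, rfl, hj⟩ | ⟨hbad, -⟩ | ⟨hbad, -⟩
  rotate_left
  · exact absurd hbad (by decide)
  · exact absurd hbad (by decide)
  rcases gp1 j hj with rfl | rfl
  · exact absurd rfl hzne
  have h12 : c.toSubgraph.Adj (Sum.inl (v,(1:Fin 8))) (Sum.inl (v,(2:Fin 8))) := hz
  -- at g2, other neighbor ≠ g1 must be g3 (g5 excluded by alternation)
  obtain ⟨z2, hz2ne, hz2⟩ := other_nbr hc h12.symm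
  rcases redAdj_inl_elim hz2.adj_sub with ⟨j, rfl, hj⟩ | ⟨hbad, -⟩ | ⟨hbad, -⟩
  rotate_left
  · exact absurd hbad (by decide)
  · exact absurd hbad (by decide)
  rcases gp2 j hj with rfl | rfl | rfl
  · exact absurd rfl hz2ne
  rotate_left
  · -- j = 5 : both edges at g2 are out of M, contradiction
    exact absurd (iff_of_false (notM_gadget (by decide)) (notM_gadget (by decide)))
      (halt hz2 h12.symm (by simp))
  have h23 : c.toSubgraph.Adj (Sum.inl (v,(2:Fin 8))) (Sum.inl (v,(3:Fin 8))) := hz2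
  -- at g0, other neighbor ≠ g1 must be g3
  obtain ⟨z0, hz0ne, hz0⟩ := other_nbr hc h
  rcases redAdj_inl_elim hz0.adj_sub with ⟨j, rfl, hj⟩ | ⟨hbad, -⟩ | ⟨hbad, -⟩
  rotate_left
  · exact absurd hbad (by decide)
  · exact absurd hbad (by decide)
  rcases gp0 j hj with rfl | rfl
  · exact absurd rfl hz0ne
  have h30 : c.toSubgraph.Adj (Sum.inl (v,(3:Fin 8))) (Sum.inl (v,(0:Fin 8))) := hz0.symm
  exact quad hc (by simp) (by simp) h h12 h23 h30

lemma corner12 {v : V}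
    (h : c.toSubgraph.Adj (Sum.inl (v,(1:Fin 8))) (Sum.inl (v,(2:Fin 8)))) :
    {e | e ∈ c.edges} = gadget4Cycle v := by
  obtain ⟨z, hzne, hz⟩ := other_nbr hc h
  rcases redAdj_inl_elim hz.adj_sub with ⟨j, rfl, hj⟩ | ⟨hbad, -⟩ | ⟨hbad, -⟩
  rotate_left
  · exact absurd hbad (by decide)
  · exact absurd hbad (by decide)
  rcases gp1 j hj with rfl | rfl
  · exact corner01 hc halt hz.symm
  · exact absurd rfl hzne

lemma corner30 {v : V}
    (h : c.toSubgraph.Adj (Sum.inl (v,(3:Fin 8))) (Sum.inl (v,(0:Fin 8)))) :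
    {e | e ∈ c.edges} = gadget4Cycle v := by
  obtain ⟨z, hzne, hz⟩ := other_nbr hc h.symm
  rcases redAdj_inl_elim hz.adj_sub with ⟨j, rfl, hj⟩ | ⟨hbad, -⟩ | ⟨hbad, -⟩
  rotate_left
  · exact absurd hbad (by decide)
  · exact absurd hbad (by decide)
  rcases gp0 j hj with rfl | rfl
  · exact corner01 hc halt hz
  · exact absurd rfl hzne

lemma gadget_main {v : V}
    (htouch : ∃ e ∈ gadget4Cycle v, e ∈ {e | e ∈ c.edges})
    (hne : {e | e ∈ c.edges} ≠ gadget4Cycle v) :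
    ∃ e6 e7 : Sym2 V, e6 ≠ e7 ∧
      (∃ w, w ≠ v ∧ w ∈ e6 ∧ v ∈ e6 ∧ e6 ∈ H.edgeSet ∧
        c.toSubgraph.Adj (Sum.inr (v,e6)) (Sum.inr (w,e6))) ∧
      (∃ w, w ≠ v ∧ w ∈ e7 ∧ v ∈ e7 ∧ e7 ∈ H.edgeSet ∧
        c.toSubgraph.Adj (Sum.inr (v,e7)) (Sum.inr (w,e7))) ∧
      (∀ (e : Sym2 V) (u : V), c.toSubgraph.Adj (Sum.inr (v,e)) (Sum.inr (u,e)) →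
        e = e6 ∨ e = e7) ∧
      Sum.inl (v,(2:Fin 8)) ∈ c.support := by
  classical
  -- first, derive the edge 2-3 of the gadget is used
  obtain ⟨x, hxg, hxC⟩ := htouch
  have hSx : ∀ a b : RedV V, s(a,b) ∈ {e | e ∈ c.edges} → c.toSubgraph.Adj a b := by
    intro a b hab
    rw [Set.mem_setOf_eq] at hab
    rw [← Subgraph.mem_edgeSet, edgeSet_toSubgraph]
    exact hab
  simp only [gadget4Cycle, Set.mem_insert_iff, Set.mem_singleton_iff] at hxg
  have h23 : c.toSubgraph.Adj (Sum.inl (v,(2:Fin 8))) (Sum.inl (v,(3:Fin 8))) := by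
    rcases hxg with rfl | rfl | rfl | rfl
    · exact absurd (corner01 hc halt (hSx _ _ hxC)) hne
    · exact absurd (corner12 hc halt (hSx _ _ hxC)) hne
    · exact hSx _ _ hxC
    · exact absurd (corner30 hc halt (hSx _ _ hxC)) hne
  -- at g3, other neighbor ≠ g2 must be g4
  obtain ⟨z, hzne, hz⟩ := other_nbr hc h23.symm
  rcases redAdj_inl_elim hz.adj_sub with ⟨j, rfl, hj⟩ | ⟨hbad, -⟩ | ⟨hbad, -⟩
  rotate_left
  · exact absurd hbad (by decide)
  · exact absurd hbad (by decide)
  rcases gp3 j hj with rfl | rfl | rfl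
  · exact absurd rfl hzne
  · exact absurd (corner30 hc halt hz) hne
  have h34 : c.toSubgraph.Adj (Sum.inl (v,(3:Fin 8))) (Sum.inl (v,(4:Fin 8))) := hz
  -- at g2, other neighbor ≠ g3 must be g5
  obtain ⟨z2, hz2ne, hz2⟩ := other_nbr hc h23
  rcases redAdj_inl_elim hz2.adj_sub with ⟨j, rfl, hj⟩ | ⟨hbad, -⟩ | ⟨hbad, -⟩
  rotate_left
  · exact absurd hbad (by decide)
  · exact absurd hbad (by decide)
  rcases gp2 j hj with rfl | rfl | rfl
  · exact absurd (corner12 hc halt hz2.symm) hne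
  · exact absurd rfl hz2ne
  have h25 : c.toSubgraph.Adj (Sum.inl (v,(2:Fin 8))) (Sum.inl (v,(5:Fin 8))) := hz2
  -- at g4, other neighbor ≠ g3 must be g6
  obtain ⟨z4, hz4ne, hz4⟩ := other_nbr hc h34.symm
  rcases redAdj_inl_elim hz4.adj_sub with ⟨j, rfl, hj⟩ | ⟨hbad, -⟩ | ⟨hbad, -⟩
  rotate_left
  · exact absurd hbad (by decide)
  · exact absurd hbad (by decide)
  rcases gp4 j hj with rfl | rfl
  · exact absurd rfl hz4ne
  have h46 : c.toSubgraph.Adj (Sum.inl (v,(4:Fin 8))) (Sum.inl (v,(6:Fin 8))) := hz4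
  -- at g5, other neighbor ≠ g2 must be g7
  obtain ⟨z5, hz5ne, hz5⟩ := other_nbr hc h25.symm
  rcases redAdj_inl_elim hz5.adj_sub with ⟨j, rfl, hj⟩ | ⟨hbad, -⟩ | ⟨hbad, -⟩
  rotate_left
  · exact absurd hbad (by decide)
  · exact absurd hbad (by decide)
  rcases gp5 j hj with rfl | rfl
  · exact absurd rfl hz5ne
  have h57 : c.toSubgraph.Adj (Sum.inl (v,(5:Fin 8))) (Sum.inl (v,(7:Fin 8))) := hz5
  -- at g6, the other neighbor ≠ g4 must be a connection vertex
  obtain ⟨z6, hz6ne, hz6⟩ := other_nbr hc h46.symm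
  have h6c : ∃ e6 : Sym2 V, c.toSubgraph.Adj (Sum.inl (v,(6:Fin 8))) (Sum.inr (v,e6)) := by
    rcases redAdj_inl_elim hz6.adj_sub with ⟨j, rfl, hj⟩ | ⟨-, rfl | rfl⟩ | ⟨hbad, -⟩
    · exact absurd (gp6 j hj) (by intro h; subst h; exact hz6ne rfl)
    · exact ⟨ord v 0, hz6⟩
    · exact ⟨ord v 1, hz6⟩
    · exact absurd hbad (by decide)
  obtain ⟨e6, h6c⟩ := h6c
  -- at g7, the other neighbor ≠ g5 must be a connection vertex
  obtain ⟨z7, hz7ne, hz7⟩ := other_nbr hc h57.symm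
  have h7c : ∃ e7 : Sym2 V, c.toSubgraph.Adj (Sum.inl (v,(7:Fin 8))) (Sum.inr (v,e7)) := by
    rcases redAdj_inl_elim hz7.adj_sub with ⟨j, rfl, hj⟩ | ⟨hbad, -⟩ | ⟨-, rfl | rfl⟩
    · exact absurd (gp7 j hj) (by intro h; subst h; exact hz7ne rfl)
    · exact absurd hbad (by decide)
    · exact ⟨ord v 1, hz7⟩
    · exact ⟨ord v 2, hz7⟩
  obtain ⟨e7, h7c⟩ := h7c
  -- at the connection vertex inr (v,e6), the other neighbor ≠ g6 must be a middle partner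
  have hmid : ∀ e : Sym2 V, c.toSubgraph.Adj (Sum.inl (v,(6:Fin 8))) (Sum.inr (v,e)) ∨
      c.toSubgraph.Adj (Sum.inl (v,(7:Fin 8))) (Sum.inr (v,e)) →
      ∃ w, w ≠ v ∧ w ∈ e ∧ v ∈ e ∧ e ∈ H.edgeSet ∧
        c.toSubgraph.Adj (Sum.inr (v,e)) (Sum.inr (w,e)) := by
    intro e hconn
    have hadj : ∃ i : Fin 8, (i = 6 ∨ i = 7) ∧
        c.toSubgraph.Adj (Sum.inr (v,e)) (Sum.inl (v,i)) := by
      rcases hconn with h | h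
      · exact ⟨6, Or.inl rfl, h.symm⟩
      · exact ⟨7, Or.inr rfl, h.symm⟩
    obtain ⟨i, hi67, hadj⟩ := hadj
    obtain ⟨z, hzne, hz⟩ := other_nbr hc hadj
    rcases redAdj_inr_elim hz.adj_sub with ⟨rfl, -⟩ | ⟨rfl, -⟩ | ⟨w, he, hv, hw, hwv, rfl⟩
    · -- z = g6
      rcases hi67 with rfl | rfl
      · exact absurd rfl hzne
      · exact absurd (iff_of_false notM_conn notM_conn) (halt hz hadj (by simp))
    · rcases hi67 with rfl | rfl
      · exact absurd (iff_of_false notM_conn notM_conn) (halt hz hadj (by simp))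
      · exact absurd rfl hzne
    · exact ⟨w, hwv, hw, hv, he, hz⟩
  obtain ⟨w6, hw6v, hw6e, hve6, he6, hm6⟩ := hmid e6 (Or.inl h6c)
  obtain ⟨w7, hw7v, hw7e, hve7, he7, hm7⟩ := hmid e7 (Or.inr h7c)
  have hne67 : e6 ≠ e7 := by
    intro h
    subst h
    exact absurd (iff_of_false notM_conn notM_conn)
      (halt h6c.symm h7c.symm (by simp))
  refine ⟨e6, e7, hne67, ⟨w6, hw6v, hw6e, hve6, he6, hm6⟩, ⟨w7, hw7v, hw7e, hve7, he7, hm7⟩,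
    ?_, ?_⟩
  · -- completeness
    intro e u hm
    obtain ⟨z, hzne, hz⟩ := other_nbr hc hm
    rcases redAdj_inr_elim hz.adj_sub with ⟨rfl, -⟩ | ⟨rfl, -⟩ | ⟨w', he', hv', hw', hwv', rfl⟩
    · -- z = g6 : then inr (v,e) is a neighbor of g6, so it equals inr (v,e6)
      have := nbrs_le_two hc h46.symm h6c (by simp) hz.symm
      rcases this with h | h
      · exact absurd h (by simp)
      · left
        have h3 : v = v ∧ e = e6 := by simpa [Prod.ext_iff] using h
        exact h3.2
    · have := nbrs_le_two hc h57.symm h7c (by simp) hz.symm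
      rcases this with h | h
      · exact absurd h (by simp)
      · right
        have h3 : v = v ∧ e = e7 := by simpa [Prod.ext_iff] using h
        exact h3.2
    · -- two middle edges at inr (v,e) : contradiction with alternation
      exfalso
      have hmR := hm.adj_sub
      rcases redAdj_inr_elim hmR with ⟨hbad, -⟩ | ⟨hbad, -⟩ | ⟨w'', he'', hv'', hw'', hwv'', heq⟩
      · exact absurd hbad (by simp)
      · exact absurd hbad (by simp)
      · have hwu : w'' = u := by
          have h4 : u = w'' ∧ e = e := by simpa [Prod.ext_iff] using heq
          exact h4.1.symm
        have hue : u ∈ e := hwu ▸ hw''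
        have huv : u ≠ v := hwu ▸ hwv''
        have hM1 : s(Sum.inr (v,e), Sum.inr (u,e)) ∈ redM H :=
          mid_mem_redM he'' hv'' hue (fun h => huv h.symm)
        have hM2 : s(Sum.inr (v,e), Sum.inr (w',e)) ∈ redM H :=
          mid_mem_redM he' hv' hw' (fun h => hwv' h.symm)
        exact absurd (iff_of_true hM2 hM1) (halt hz hm hzne)
  · exact (mem_verts_toSubgraph c).mp h23.fst_mem

end Gadget
end RedAux



open CycleAux RedAux in
/-- in the planar hardness reduction, (a) if `M △ N` consists of
more than one cycle (it is nonempty and not a single alternating cycle), every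
reconfiguration sequence has length at least 2; and (b) if a shortest sequence
`⟨M, M △ C, N⟩` of length 2 exists, where `C` is an `M`-alternating cycle that
is not a single gadget 4-cycle, then the set of edges `e` of `H` whose middle
edge `u_e v_e` lies in `C` forms a Hamiltonian cycle of `H`. -/
theorem hardness_reduction_planar_details
    {V : Type*} [Fintype V] [DecidableEq V] (H : SimpleGraph V)
    (hreg : ∀ v : V, (H.neighborSet v).ncard = 3)
    (ord : V → Fin 3 → Sym2 V) (hord : ValidOrd H ord) :
    (¬ IsAltCycle (redGraph H ord) (redM H) (symmDiff (redM H) (redN H)) →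
      redM H ≠ redN H →
      ∀ t : ℕ, ReconSeq (redGraph H ord) (redM H) (redN H) t → 2 ≤ t) ∧
    (∀ C : Set (Sym2 (RedV V)), IsAltCycle (redGraph H ord) (redM H) C →
      (∀ v : V, C ≠ gadget4Cycle v) →
      Step (redGraph H ord) (symmDiff (redM H) C) (redN H) →
      ∃ (v : V) (c : H.Walk v v), c.IsCycle ∧ (∀ u : V, u ∈ c.support) ∧
        {e ∈ H.edgeSet | ∃ u w : V, u ≠ w ∧ s(inr (u, e), inr (w, e)) ∈ C} =
          {e | e ∈ c.edges}) := by
  constructor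
  · -- part (a)
    intro hnac hMN t hseq
    by_contra hlt
    push_neg at hlt
    interval_cases t
    · obtain ⟨f, h0, ht, -, -⟩ := hseq
      exact hMN (h0 ▸ ht)
    · obtain ⟨f, h0, ht, hstep, -⟩ := hseq
      obtain ⟨C, hC, hN⟩ := hstep 0 (by omega)
      rw [h0] at hC
      rw [show (0:ℕ) + 1 = 1 from rfl, ht, h0] at hN
      apply hnac
      have hCN : symmDiff (redM H) (redN H) = C := by
        rw [hN, symmDiff_symmDiff_cancel_left]
      rwa [hCN]
  · intro C hC hne hstep
    obtain ⟨v₀, c, hc, hCeq, hchain, hends⟩ := hC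
    obtain ⟨C', hC', hNeq⟩ := hstep
    obtain ⟨w₀, c', hc', hC'eq, hchain', hends'⟩ := hC'
    have halt : ∀ {x y z : RedV V}, c.toSubgraph.Adj x y → c.toSubgraph.Adj x z → y ≠ z →
        ¬(s(x,y) ∈ redM H ↔ s(x,z) ∈ redM H) :=
      fun hy hz hyz => CycleAux.alt_at hc hchain hends hy hz hyz
    have hC'CD : C' = symmDiff C (symmDiff (redM H) (redN H)) := by
      have h1 : C' = symmDiff (symmDiff (redM H) C) (redN H) := by
        rw [hNeq, symmDiff_symmDiff_cancel_left]
      rw [h1, symmDiff_comm (redM H) C, symmDiff_assoc]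
    have hSx : ∀ a b : RedV V, s(a,b) ∈ C → c.toSubgraph.Adj a b := by
      intro a b hab
      rw [hCeq] at hab
      rw [← Subgraph.mem_edgeSet, edgeSet_toSubgraph]
      exact hab
    have hS'x : ∀ a b : RedV V, s(a,b) ∈ C' → c'.toSubgraph.Adj a b := by
      intro a b hab
      rw [hC'eq] at hab
      rw [← Subgraph.mem_edgeSet, edgeSet_toSubgraph]
      exact hab
    have hne' : ∀ v : V, {e | e ∈ c.edges} ≠ gadget4Cycle v := by
      intro v h
      exact hne v (hCeq.trans h)
    -- every gadget 4-cycle is touched by C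
    have touch : ∀ v : V, ∃ e ∈ gadget4Cycle v, e ∈ {e | e ∈ c.edges} := by
      intro v
      by_contra hnot
      push_neg at hnot
      have hsub : ∀ e ∈ gadget4Cycle v, e ∈ C' := by
        intro e he
        rw [hC'CD, Set.mem_symmDiff]
        right
        refine ⟨(symmDiff_MN e).mpr ⟨v, he⟩, ?_⟩
        rw [hCeq]
        exact hnot e he
      have q1 := hS'x _ _ (hsub s(inl (v,0), inl (v,1)) (by simp [gadget4Cycle]))
      have q2 := hS'x _ _ (hsub s(inl (v,1), inl (v,2)) (by simp [gadget4Cycle]))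
      have q3 := hS'x _ _ (hsub s(inl (v,2), inl (v,3)) (by simp [gadget4Cycle]))
      have q4 := hS'x _ _ (hsub s(inl (v,3), inl (v,0)) (by simp [gadget4Cycle]))
      have hquad := CycleAux.quad hc' (by simp) (by simp) q1 q2 q3 q4
      have hC'g : C' = gadget4Cycle v := by rw [hC'eq]; exact hquad
      have hCD : C = symmDiff C' (symmDiff (redM H) (redN H)) := by
        rw [hC'CD, symmDiff_symmDiff_cancel_right]
      obtain ⟨u, hu⟩ : (H.neighborSet v).Nonempty := by
        apply Set.nonempty_of_ncard_ne_zero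
        rw [hreg v]
        omega
      have hadj : H.Adj v u := hu
      have huv : u ≠ v := fun h => H.irrefl (h ▸ hadj)
      have hsubu : ∀ e ∈ gadget4Cycle u, e ∈ C := by
        intro e he
        rw [hCD, Set.mem_symmDiff]
        right
        refine ⟨(symmDiff_MN e).mpr ⟨u, he⟩, ?_⟩
        rw [hC'g]
        exact gadget4_disjoint huv he
      have p1 := hSx _ _ (hsubu s(inl (u,0), inl (u,1)) (by simp [gadget4Cycle]))
      have p2 := hSx _ _ (hsubu s(inl (u,1), inl (u,2)) (by simp [gadget4Cycle]))
      have p3 := hSx _ _ (hsubu s(inl (u,2), inl (u,3)) (by simp [gadget4Cycle]))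
      have p4 := hSx _ _ (hsubu s(inl (u,3), inl (u,0)) (by simp [gadget4Cycle]))
      exact hne' u (CycleAux.quad hc (by simp) (by simp) p1 p2 p3 p4)
    have gm := fun v : V => RedAux.gadget_main hc halt (touch v) (hne' v)
    refine ⟨RedAux.projV v₀, RedAux.proj c, ?_, ?_, ?_⟩
    · -- IsCycle
      apply CycleAux.closed_trail_isCycle
      · exact ⟨RedAux.proj_edges_nodup c ((Walk.isCycle_def c).mp hc).1.edges_nodup⟩
      · -- not nil
        obtain ⟨e6, e7, -, ⟨w, hwv, hwe, hve, he, hm⟩, -, -, -⟩ := gm (RedAux.projV v₀)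
        have hmem : s(inr (RedAux.projV v₀, e6), inr (w, e6)) ∈ c.edges := by
          have := Subgraph.mem_edgeSet.mpr hm
          rwa [edgeSet_toSubgraph] at this
        have hf : s(RedAux.projV v₀, w) ∈ (RedAux.proj c).edges := by
          rw [RedAux.proj_edges]
          exact ⟨_, _, hmem, by simpa [RedAux.projV] using fun h => hwv h.symm, by
            simp [RedAux.projV]⟩
        intro hnil
        have hlen := Walk.nil_iff_length_eq.mp hnil
        have : (RedAux.proj c).edges.length = 0 := by
          rw [Walk.length_edges, hlen]
        rw [List.length_eq_zero_iff] at this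
        rw [this] at hf
        simp at hf
      · -- degree condition
        intro x e1 e2 e3 h1 h2 h3 hx1 hx2 hx3
        obtain ⟨e6, e7, hne67, -, -, hcompl, -⟩ := gm x
        have key : ∀ f, f ∈ (RedAux.proj c).edges → x ∈ f → f = e6 ∨ f = e7 := by
          intro f hf hxf
          rw [RedAux.proj_edges] at hf
          obtain ⟨a, b, hab, hnp, rfl⟩ := hf
          obtain ⟨u', w', e', rfl, rfl, hu', hw', huw', he', hesw'⟩ :=
            RedAux.mid_of_proj_ne (c.adj_of_mem_edges hab) hnp
          have hSab : c.toSubgraph.Adj (inr (u',e')) (inr (w',e')) := by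
            rw [← Subgraph.mem_edgeSet, edgeSet_toSubgraph]
            exact hab
          simp only [RedAux.projV] at hxf ⊢
          rw [Sym2.mem_iff] at hxf
          have hex : ∃ uu, c.toSubgraph.Adj (inr (x,e')) (inr (uu,e')) := by
            rcases hxf with rfl | rfl
            · exact ⟨w', hSab⟩
            · exact ⟨u', hSab.symm⟩
          obtain ⟨uu, huu⟩ := hex
          rw [← hesw']
          exact hcompl e' uu huu
        rcases key e1 h1 hx1 with rfl | rfl <;> rcases key e2 h2 hx2 with rfl | rfl <;>
          rcases key e3 h3 hx3 with rfl | rfl <;> simp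
    · -- spanning
      intro u
      obtain ⟨-, -, -, -, -, -, hsupp⟩ := gm u
      have := RedAux.proj_support c _ hsupp
      simpa [RedAux.projV] using this
    · -- edge sets
      ext e
      simp only [Set.mem_setOf_eq]
      constructor
      · rintro ⟨heE, u, w, huw, hmC⟩
        have hS := hSx _ _ hmC
        rcases redAdj_inr_elim hS.adj_sub with ⟨hbad, -⟩ | ⟨hbad, -⟩ |
          ⟨w', he', hv', hw', hwv', heq⟩
        · simp at hbad
        · simp at hbad
        · have hww : w' = w := by
            have h4 : w = w' ∧ e = e := by simpa [Prod.ext_iff] using heq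
            exact h4.1.symm
          subst hww
          have hesw : e = s(u, w') := sym2_eq_of_mem hv' hw' huw
          have hmem : s(inr (u, e), inr (w', e)) ∈ c.edges := by
            rw [hCeq] at hmC
            exact hmC
          rw [RedAux.proj_edges]
          exact ⟨inr (u,e), inr (w',e), hmem, by simpa [RedAux.projV] using huw, by
            simpa [RedAux.projV] using hesw⟩
      · intro hf
        rw [RedAux.proj_edges] at hf
        obtain ⟨a, b, hab, hnp, rfl⟩ := hf
        obtain ⟨u', w', e', rfl, rfl, hu', hw', huw', he', hesw'⟩ :=
          RedAux.mid_of_proj_ne (c.adj_of_mem_edges hab) hnp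
        simp only [RedAux.projV]
        rw [← hesw']
        refine ⟨he', u', w', huw', ?_⟩
        rw [hCeq]
        exact hab
end
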